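/- For every n-qubit mixed state ρ, 4^n · Σ_{x ∈ 𝔽₂^{2n}} p_ρ(x)³ ≥ F(ρ)^6, where F(ρ) is the stabilizer fidelity of ρ. -/

import Mathlib

open scoped BigOperators ComplexOrder

/-- The phase space `𝔽₂^{2n}`, written as pairs `(a, b)` with `a, b ∈ 𝔽₂ⁿ`. -/
abbrev PhaseSpace (n : ℕ) := (Fin n → ZMod 2) × (Fin n → ZMod 2)

/-- The symplectic product `[x, y] = a·d + b·c` for `x = (a,b)`, `y = (c,d)`. -/
def sympl {n : ℕ} (x y : PhaseSpace n) : ZMod 2 :=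
  ∑ i, x.1 i * y.2 i + ∑ i, x.2 i * y.1 i

/-- The symplectic Fourier transform `f̂(a) = 4^{-n} ∑_x (-1)^{[a,x]} f(x)`. -/
noncomputable def sft {n : ℕ} (f : PhaseSpace n → ℝ) (a : PhaseSpace n) : ℝ :=
  (1 / 4 ^ n) * ∑ x, (-1 : ℝ) ^ (sympl a x).val * f x

/-- The symplectic complement of a set `S ⊆ 𝔽₂^{2n}`. -/
def symplComplement {n : ℕ} (S : Set (PhaseSpace n)) : Set (PhaseSpace n) :=
  {x | ∀ a ∈ S, sympl x a = 0}

/-- The Weyl operator `W_x = i^{a·b} X^a Z^b` for `x = (a,b)`, as a `2^n × 2^n` matrix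
indexed by `𝔽₂ⁿ`: `(W_x)_{k,j} = i^{a·b} (-1)^{b·j} [k = j + a]`. -/
noncomputable def Weyl {n : ℕ} (x : PhaseSpace n) :
    Matrix (Fin n → ZMod 2) (Fin n → ZMod 2) ℂ :=
  fun k j => Complex.I ^ (∑ i, (x.1 i).val * (x.2 i).val) *
    (if k = j + x.1 then (-1 : ℂ) ^ (∑ i, (x.2 i).val * (j i).val) else 0)

/-- `p_H(x) = 2^{-n} tr(W_x H)²` (the trace is real for Hermitian `H`). -/
noncomputable def pFun {n : ℕ} (H : Matrix (Fin n → ZMod 2) (Fin n → ZMod 2) ℂ)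
    (x : PhaseSpace n) : ℝ :=
  ((Weyl x * H).trace.re) ^ 2 / 2 ^ n

/-- A set is Lagrangian if it equals its symplectic complement. -/
def IsLagrangian {n : ℕ} (S : Set (PhaseSpace n)) : Prop :=
  S = symplComplement S

/-- The outer product `|φ⟩⟨φ|` of a vector `φ ∈ ℂ^{2^n}`. -/
noncomputable def outer {n : ℕ} (φ : (Fin n → ZMod 2) → ℂ) :
    Matrix (Fin n → ZMod 2) (Fin n → ZMod 2) ℂ :=
  Matrix.vecMulVec φ (fun j => starRingEnd ℂ (φ j))

/-- `Weyl(σ) = {x : tr(W_x σ) = ±1}`. -/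
def weylSet {n : ℕ} (σ : Matrix (Fin n → ZMod 2) (Fin n → ZMod 2) ℂ) :
    Set (PhaseSpace n) :=
  {x | (Weyl x * σ).trace = 1 ∨ (Weyl x * σ).trace = -1}

/-- A unit vector `φ` is a stabilizer state iff `Weyl(|φ⟩⟨φ|)` is Lagrangian. -/
def IsStabilizerState {n : ℕ} (φ : (Fin n → ZMod 2) → ℂ) : Prop :=
  (∑ j, Complex.normSq (φ j)) = 1 ∧ IsLagrangian (weylSet (outer φ))

/-- The stabilizer fidelity `F(ρ) = max_{stabilizer |φ⟩} ⟨φ|ρ|φ⟩ = max tr(ρ|φ⟩⟨φ|)`. -/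
noncomputable def stabFidelity {n : ℕ}
    (ρ : Matrix (Fin n → ZMod 2) (Fin n → ZMod 2) ℂ) : ℝ :=
  ⨆ φ : {φ : (Fin n → ZMod 2) → ℂ // IsStabilizerState φ}, ((ρ * outer φ.1).trace).re

/-! For a stabilizer state `|φ⟩` write `c_x = tr(W_x |φ⟩⟨φ|)`. The Weyl operators are Hermitian
and satisfy the Parseval identity `∑_x tr(W_x A) tr(W_x B) = 2ⁿ tr(AB)`, so `∑_x c_x² = 2ⁿ`. On the
Lagrangian set `L = Weyl(|φ⟩⟨φ|)` we have `c_x = ±1`, and `|L| = 2ⁿ` by double counting a character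
sum; hence `c` vanishes off `L`. Parseval once more gives
`2ⁿ ⟨φ|ρ|φ⟩ = ∑_{x ∈ L} c_x tr(W_x ρ) ≤ ∑_{x ∈ L} |tr(W_x ρ)|`, and the power-mean inequality over
the `2ⁿ` points of `L` yields `⟨φ|ρ|φ⟩⁶ ≤ 2⁻ⁿ ∑_x tr(W_x ρ)⁶ = 4ⁿ ∑_x p_ρ(x)³`. -/

open Finset Matrix

lemma ZModModule.eq_add_iff_eq_add {G : Type*} [AddCommGroup G] [Module (ZMod 2) G] (a b c : G) :
    a = b + c ↔ c = a + b := by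
  rw [← sub_eq_iff_eq_add', ZModModule.sub_eq_add, eq_comm]

lemma Matrix.IsHermitian.ofReal_re_trace_mul {m : Type*} [Fintype m]
    {A B : Matrix m m ℂ} (hA : A.IsHermitian) (hB : B.IsHermitian) :
    (((A * B).trace.re : ℝ) : ℂ) = (A * B).trace := by
  rw [← Complex.conj_eq_iff_re, ← Complex.star_def, ← trace_conjTranspose, conjTranspose_mul,
    hA.eq, hB.eq, trace_mul_comm]

lemma iSup_pow_le_of_forall_pow_le {ι : Sort*} {f : ι → ℝ} (hf : ∀ i, 0 ≤ f i) {m : ℕ}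
    (hm : m ≠ 0) {S : ℝ} (hS : 0 ≤ S) (h : ∀ i, f i ^ m ≤ S) : (⨆ i, f i) ^ m ≤ S := by
  set t := S ^ (m⁻¹ : ℝ)
  have ht : t ^ m = S := Real.rpow_inv_natCast_pow hS hm
  have hsup : ⨆ i, f i ≤ t :=
    Real.iSup_le (fun i => le_of_pow_le_pow_left₀ hm (by positivity) (ht ▸ h i)) (by positivity)
  calc (⨆ i, f i) ^ m ≤ t ^ m := pow_le_pow_left₀ (Real.iSup_nonneg hf) hsup m
    _ = S := ht

noncomputable def signChar : AddChar (ZMod 2) ℂ :=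
  AddChar.zmodChar 2 (by norm_num : (-1 : ℂ) ^ 2 = 1)

lemma signChar_natCast (m : ℕ) : signChar m = (-1) ^ m := AddChar.zmodChar_apply' _ m

lemma signChar_apply (z : ZMod 2) : signChar z = (-1) ^ z.val := rfl

lemma signChar_eq_one_iff (z : ZMod 2) : signChar z = 1 ↔ z = 0 := by
  rw [signChar_apply, neg_one_pow_eq_one_iff_even (by norm_num), ← ZMod.natCast_eq_zero_iff_even,
    ZMod.natCast_zmod_val]

lemma star_signChar (z : ZMod 2) : star (signChar z) = signChar z := by
  simp [signChar_apply]

lemma signChar_mul_self (z : ZMod 2) : signChar z * signChar z = 1 := by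
  rw [← AddChar.map_add_eq_mul, CharTwo.add_self_eq_zero, AddChar.map_zero_eq_one]

lemma sum_signChar_addMonoidHom {G : Type*} [AddGroup G] [Fintype G] (f : G →+ ZMod 2) :
    ∑ g, signChar (f g) = if f = 0 then (Fintype.card G : ℂ) else 0 := by
  classical
  have htriv : signChar.compAddMonoidHom f = 0 ↔ f = 0 := by
    simp only [AddChar.eq_zero_iff, AddChar.compAddMonoidHom_apply, signChar_eq_one_iff,
      AddMonoidHom.ext_iff, AddMonoidHom.zero_apply]
  simpa [htriv] using AddChar.sum_eq_ite (signChar.compAddMonoidHom f)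

section

variable {n : ℕ}

lemma neg_one_pow_sum_val_mul_val (u v : Fin n → ZMod 2) :
    (-1 : ℂ) ^ (∑ i, (u i).val * (v i).val) = signChar (u ⬝ᵥ v) := by
  rw [← signChar_natCast]
  congr 1
  push_cast [ZMod.natCast_val, ZMod.cast_id', id]
  rfl

lemma sum_signChar_dotProduct (v : Fin n → ZMod 2) :
    ∑ u : Fin n → ZMod 2, signChar (u ⬝ᵥ v) = if v = 0 then 2 ^ n else 0 := by
  set f : (Fin n → ZMod 2) →+ ZMod 2 := AddMonoidHom.mk' (· ⬝ᵥ v) fun a b => add_dotProduct a b v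
  have hf : f = 0 ↔ v = 0 := by
    refine ⟨fun h => ?_, fun h => by ext; simp [f, h]⟩
    exact dotProduct_eq_zero v fun w => by rw [dotProduct_comm]; exact DFunLike.congr_fun h w
  have h := sum_signChar_addMonoidHom f
  simp only [hf] at h
  simpa [f] using h

lemma sympl_eq_dotProduct (x y : PhaseSpace n) : sympl x y = x.1 ⬝ᵥ y.2 + x.2 ⬝ᵥ y.1 := rfl

lemma sympl_comm (x y : PhaseSpace n) : sympl x y = sympl y x := by
  simp only [sympl_eq_dotProduct, dotProduct_comm x.1, dotProduct_comm x.2, add_comm]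

lemma sympl_add_left (x y z : PhaseSpace n) : sympl (x + y) z = sympl x z + sympl y z := by
  simp only [sympl_eq_dotProduct, Prod.fst_add, Prod.snd_add, add_dotProduct]; ring

def symplHom (x : PhaseSpace n) : PhaseSpace n →+ ZMod 2 :=
  AddMonoidHom.mk' (sympl x) fun y z => by
    rw [sympl_comm, sympl_add_left, sympl_comm y, sympl_comm z]

@[simp] lemma symplHom_apply (x y : PhaseSpace n) : symplHom x y = sympl x y := rfl

lemma symplHom_eq_zero_iff (x : PhaseSpace n) : symplHom x = 0 ↔ x = 0 := by
  refine ⟨fun h => ?_, fun h => by ext y; simp [symplHom, h, sympl_eq_dotProduct]⟩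
  have hfst : ∀ u, x.1 ⬝ᵥ u = 0 := fun u => by
    simpa [sympl_eq_dotProduct] using DFunLike.congr_fun h (0, u)
  have hsnd : ∀ u, x.2 ⬝ᵥ u = 0 := fun u => by
    simpa [sympl_eq_dotProduct] using DFunLike.congr_fun h (u, 0)
  exact Prod.ext (dotProduct_eq_zero _ hfst) (dotProduct_eq_zero _ hsnd)

def symplComplementAddSubgroup (S : Set (PhaseSpace n)) : AddSubgroup (PhaseSpace n) where
  carrier := symplComplement S
  zero_mem' a _ := by simp [sympl_eq_dotProduct]
  add_mem' hx hy a ha := by rw [sympl_add_left, hx a ha, hy a ha, add_zero]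
  neg_mem' {x} hx a ha := by
    simp only [sympl_eq_dotProduct, Prod.fst_neg, Prod.snd_neg, neg_dotProduct]
    rw [← neg_add, ← sympl_eq_dotProduct, hx a ha, neg_zero]

open Classical in
lemma sum_signChar_sympl_addSubgroup (L : AddSubgroup (PhaseSpace n)) [Fintype L]
    (x : PhaseSpace n) :
    ∑ a : L, signChar (sympl x a) = if x ∈ symplComplement L then (Fintype.card L : ℂ) else 0 := by
  have hf : (symplHom x).comp L.subtype = 0 ↔ x ∈ symplComplement L := by
    simp [AddMonoidHom.ext_iff, symplComplement, symplHom]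
  simpa [hf] using sum_signChar_addMonoidHom ((symplHom x).comp L.subtype)

lemma sum_signChar_sympl (a : PhaseSpace n) :
    ∑ x : PhaseSpace n, signChar (sympl x a) = if a = 0 then 4 ^ n else 0 := by
  simp_rw [sympl_comm _ a]
  have := sum_signChar_addMonoidHom (symplHom a)
  simp only [symplHom_eq_zero_iff] at this
  simpa [← mul_pow] using this

lemma card_mul_card_symplComplement (L : AddSubgroup (PhaseSpace n)) :
    Nat.card L * Nat.card (symplComplement (L : Set (PhaseSpace n))) = 4 ^ n := by
  classical
  have hL : ∑ a : L, ∑ x : PhaseSpace n, signChar (sympl x a) = 4 ^ n := by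
    simp [sum_signChar_sympl]
  have hLperp : ∑ x : PhaseSpace n, ∑ a : L, signChar (sympl x a) =
      Nat.card (symplComplement (L : Set (PhaseSpace n))) * Nat.card L := by
    simp [sum_signChar_sympl_addSubgroup, Nat.card_eq_fintype_card, Fintype.card_subtype,
      sum_ite]
  rw [sum_comm, hL] at hLperp
  exact_mod_cast (mul_comm _ _).trans hLperp.symm

lemma card_eq_two_pow_of_isLagrangian {S : Set (PhaseSpace n)} (hS : IsLagrangian S) :
    Nat.card S = 2 ^ n := by
  have hSL : S = symplComplementAddSubgroup S := hS
  have h := card_mul_card_symplComplement (symplComplementAddSubgroup S)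
  change Nat.card (symplComplementAddSubgroup S : Set (PhaseSpace n)) * _ = _ at h
  rw [← hSL, ← hS, ← sq, show 4 ^ n = (2 ^ n) ^ 2 by rw [← pow_mul, mul_comm, pow_mul]; rfl] at h
  exact Nat.pow_left_injective two_ne_zero h

lemma weyl_apply (x : PhaseSpace n) (k j : Fin n → ZMod 2) :
    Weyl x k j = Complex.I ^ (∑ i, (x.1 i).val * (x.2 i).val) *
      if k = j + x.1 then signChar (x.2 ⬝ᵥ j) else 0 := by
  simp only [Weyl, neg_one_pow_sum_val_mul_val]

lemma I_pow_sum_val_mul_val_mul_self (u v : Fin n → ZMod 2) :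
    Complex.I ^ (∑ i, (u i).val * (v i).val) * Complex.I ^ (∑ i, (u i).val * (v i).val) =
      signChar (u ⬝ᵥ v) := by
  rw [← mul_pow, Complex.I_mul_I, neg_one_pow_sum_val_mul_val]

lemma weyl_apply_mul_weyl_apply (a b k j k' j' : Fin n → ZMod 2) :
    Weyl (a, b) k j * Weyl (a, b) k' j' =
      if a = k + j ∧ k' = j' + a then signChar (b ⬝ᵥ (a + j + j')) else 0 := by
  simp only [weyl_apply, ZModModule.eq_add_iff_eq_add k j a]
  by_cases h : a = k + j ∧ k' = j' + a
  · rw [if_pos h.1, if_pos h.2, if_pos h]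
    calc _ = (Complex.I ^ (∑ i, (a i).val * (b i).val) * Complex.I ^ (∑ i, (a i).val * (b i).val))
          * signChar (b ⬝ᵥ j) * signChar (b ⬝ᵥ j') := by ring
      _ = _ := by
        rw [I_pow_sum_val_mul_val_mul_self, dotProduct_comm, ← AddChar.map_add_eq_mul,
          ← AddChar.map_add_eq_mul, dotProduct_add, dotProduct_add]
  · rw [if_neg h]
    rcases not_and_or.mp h with h | h <;> simp [h]

lemma sum_weyl_apply_mul_weyl_apply (k j k' j' : Fin n → ZMod 2) :
    ∑ x : PhaseSpace n, Weyl x k j * Weyl x k' j' = if j' = k ∧ k' = j then 2 ^ n else 0 := by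
  simp only [Fintype.sum_prod_type, weyl_apply_mul_weyl_apply, ite_and, sum_ite_irrel,
    sum_signChar_dotProduct, sum_const_zero, sum_ite_eq', mem_univ, if_true]
  have hj' : k + j + j + j' = 0 ↔ j' = k := by
    rw [add_assoc k, ZModModule.add_self, add_zero, add_eq_zero_iff_eq_neg, ZModModule.neg_eq_self,
      eq_comm]
  by_cases h : j' = k
  · have hk' : k' = j' + (k + j) ↔ k' = j := by
      rw [h, ← add_assoc, ZModModule.add_self, zero_add]
    simp only [hk', hj'.mpr h, if_pos h, if_true]
  · simp [hj', h]

lemma sum_trace_weyl_mul_smul_weyl (A : Matrix (Fin n → ZMod 2) (Fin n → ZMod 2) ℂ) :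
    ∑ x : PhaseSpace n, (Weyl x * A).trace • Weyl x = (2 ^ n : ℂ) • A := by
  ext k' j'
  calc (∑ x : PhaseSpace n, (Weyl x * A).trace • Weyl x) k' j'
      = ∑ k, ∑ j, A j k * ∑ x : PhaseSpace n, Weyl x k j * Weyl x k' j' := by
        simp only [Matrix.sum_apply, Matrix.smul_apply, smul_eq_mul, trace, diag_apply, mul_apply,
          sum_mul, mul_sum]
        rw [sum_comm]; refine sum_congr rfl fun k _ => ?_
        rw [sum_comm]; exact sum_congr rfl fun j _ => sum_congr rfl fun x _ => by ring
    _ = ((2 ^ n : ℂ) • A) k' j' := by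
        simp [sum_weyl_apply_mul_weyl_apply, ite_and, mul_comm]

lemma sum_trace_weyl_mul_mul_trace_weyl_mul (A B : Matrix (Fin n → ZMod 2) (Fin n → ZMod 2) ℂ) :
    ∑ x : PhaseSpace n, (Weyl x * A).trace * (Weyl x * B).trace = 2 ^ n * (A * B).trace := by
  calc ∑ x : PhaseSpace n, (Weyl x * A).trace * (Weyl x * B).trace
      = (∑ x : PhaseSpace n, ((Weyl x * A).trace • Weyl x) * B).trace := by
        simp only [trace_sum, Matrix.smul_mul, trace_smul, smul_eq_mul]
    _ = 2 ^ n * (A * B).trace := by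
        rw [← Matrix.sum_mul, sum_trace_weyl_mul_smul_weyl, Matrix.smul_mul, trace_smul,
          smul_eq_mul]

lemma isHermitian_weyl (x : PhaseSpace n) : (Weyl x).IsHermitian := by
  obtain ⟨a, b⟩ := x
  have hphase : star (Complex.I ^ (∑ i, (a i).val * (b i).val)) =
      signChar (a ⬝ᵥ b) * Complex.I ^ (∑ i, (a i).val * (b i).val) := by
    rw [star_pow, Complex.star_def, Complex.conj_I, neg_pow, neg_one_pow_sum_val_mul_val]
  ext k j
  rw [conjTranspose_apply, weyl_apply, weyl_apply, star_mul', hphase]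
  simp only [apply_ite star, star_zero, star_signChar, ZModModule.eq_add_iff_eq_add j k,
    ZModModule.eq_add_iff_eq_add k j, add_comm j k]
  split_ifs with h
  · rw [(ZModModule.eq_add_iff_eq_add k j a).mpr h, dotProduct_add, AddChar.map_add_eq_mul,
      dotProduct_comm b a]
    linear_combination (Complex.I ^ (∑ i, (a i).val * (b i).val) * signChar (b ⬝ᵥ j)) *
      (signChar_mul_self (a ⬝ᵥ b))
  · simp

lemma trace_mul_outer (A : Matrix (Fin n → ZMod 2) (Fin n → ZMod 2) ℂ)
    (φ : (Fin n → ZMod 2) → ℂ) : (A * outer φ).trace = star φ ⬝ᵥ (A *ᵥ φ) := by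
  rw [outer, mul_vecMulVec, trace_vecMulVec, dotProduct_comm]
  rfl

lemma posSemidef_outer (φ : (Fin n → ZMod 2) → ℂ) : (outer φ).PosSemidef :=
  posSemidef_vecMulVec_self_star φ

lemma re_trace_mul_outer_nonneg {ρ : Matrix (Fin n → ZMod 2) (Fin n → ZMod 2) ℂ}
    (hρ : ρ.PosSemidef) (φ : (Fin n → ZMod 2) → ℂ) : 0 ≤ (ρ * outer φ).trace.re := by
  rw [trace_mul_outer]
  exact (Complex.nonneg_iff.mp (hρ.dotProduct_mulVec_nonneg φ)).1

lemma trace_outer_mul_outer {φ : (Fin n → ZMod 2) → ℂ}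
    (hφ : ∑ j, Complex.normSq (φ j) = 1) : (outer φ * outer φ).trace = 1 := by
  have hnorm : star φ ⬝ᵥ φ = 1 := by
    rw [← Complex.ofReal_one, ← hφ]
    push_cast [Complex.normSq_eq_conj_mul_self]
    rfl
  rw [trace_mul_outer, outer, vecMulVec_mulVec]
  change star φ ⬝ᵥ (MulOpposite.op (star φ ⬝ᵥ φ) • φ) = 1
  rw [hnorm, MulOpposite.op_one, one_smul, hnorm]

lemma sq_re_trace_weyl_mul_of_mem_weylSet {σ : Matrix (Fin n → ZMod 2) (Fin n → ZMod 2) ℂ}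
    {x : PhaseSpace n} (hx : x ∈ weylSet σ) : (Weyl x * σ).trace.re ^ 2 = 1 := by
  rcases hx with h | h <;> simp [h]

lemma sum_sq_re_trace_weyl_mul_outer {φ : (Fin n → ZMod 2) → ℂ}
    (hφ : ∑ j, Complex.normSq (φ j) = 1) :
    ∑ x : PhaseSpace n, (Weyl x * outer φ).trace.re ^ 2 = 2 ^ n := by
  have hreal (x : PhaseSpace n) :
      (((Weyl x * outer φ).trace.re : ℝ) : ℂ) = (Weyl x * outer φ).trace :=
    (isHermitian_weyl x).ofReal_re_trace_mul (posSemidef_outer φ).isHermitian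
  have h := sum_trace_weyl_mul_mul_trace_weyl_mul (outer φ) (outer φ)
  rw [trace_outer_mul_outer hφ, mul_one] at h
  have hC : ((∑ x : PhaseSpace n, (Weyl x * outer φ).trace.re ^ 2 : ℝ) : ℂ) =
      ((2 ^ n : ℝ) : ℂ) := by
    push_cast
    simp_rw [sq, hreal]
    exact h
  exact_mod_cast hC

open Classical in
lemma trace_weyl_mul_outer_eq_zero_of_not_mem {φ : (Fin n → ZMod 2) → ℂ}
    (hφ : IsStabilizerState φ) {x : PhaseSpace n} (hx : x ∉ weylSet (outer φ)) :
    (Weyl x * outer φ).trace = 0 := by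
  set L := (weylSet (outer φ)).toFinset
  set c : PhaseSpace n → ℝ := fun x => (Weyl x * outer φ).trace.re
  have hL : ∑ y ∈ L, c y ^ 2 = 2 ^ n := by
    rw [sum_congr rfl fun y hy => sq_re_trace_weyl_mul_of_mem_weylSet (Set.mem_toFinset.mp hy),
      sum_const, ← Nat.card_eq_card_toFinset, card_eq_two_pow_of_isLagrangian hφ.2]
    simp
  have hLc : ∑ y ∈ Lᶜ, c y ^ 2 = 0 := by
    linarith [sum_add_sum_compl L (fun y => c y ^ 2), sum_sq_re_trace_weyl_mul_outer hφ.1]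
  have hcx : c x = 0 := pow_eq_zero_iff two_ne_zero |>.mp <|
    (sum_eq_zero_iff_of_nonneg fun y _ => sq_nonneg (c y)).mp hLc x (by simpa [L] using hx)
  rw [← (isHermitian_weyl x).ofReal_re_trace_mul (posSemidef_outer φ).isHermitian]
  exact_mod_cast hcx

open Classical in
lemma abs_two_pow_mul_re_trace_mul_outer_le {φ : (Fin n → ZMod 2) → ℂ}
    (hφ : IsStabilizerState φ) (ρ : Matrix (Fin n → ZMod 2) (Fin n → ZMod 2) ℂ) :
    |2 ^ n * (ρ * outer φ).trace.re| ≤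
      ∑ x ∈ (weylSet (outer φ)).toFinset, |(Weyl x * ρ).trace.re| := by
  set L := (weylSet (outer φ)).toFinset
  set c : PhaseSpace n → ℝ := fun x => (Weyl x * outer φ).trace.re
  have hreal (x : PhaseSpace n) : ((c x : ℝ) : ℂ) = (Weyl x * outer φ).trace :=
    (isHermitian_weyl x).ofReal_re_trace_mul (posSemidef_outer φ).isHermitian
  have hexpand : 2 ^ n * (ρ * outer φ).trace.re = ∑ x ∈ L, c x * (Weyl x * ρ).trace.re := by
    have h := congrArg Complex.re (sum_trace_weyl_mul_mul_trace_weyl_mul (outer φ) ρ)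
    simp only [← hreal, Complex.re_sum, Complex.re_ofReal_mul, trace_mul_comm (outer φ) ρ] at h
    rw [sum_subset (subset_univ L) fun x _ hx => by
      simp [c, trace_weyl_mul_outer_eq_zero_of_not_mem hφ (by simpa [L] using hx)], h]
    rw [← Complex.re_ofReal_mul]
    norm_cast
  rw [hexpand]
  refine (abs_sum_le_sum_abs _ _).trans (sum_le_sum fun x hx => ?_)
  have hc : |c x| = 1 := by
    rcases Set.mem_toFinset.mp hx with h | h <;> simp [c, h]
  rw [abs_mul, hc, one_mul]

lemma four_pow_mul_sum_pFun_cube (H : Matrix (Fin n → ZMod 2) (Fin n → ZMod 2) ℂ) :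
    4 ^ n * ∑ x, pFun H x ^ 3 = (∑ x : PhaseSpace n, (Weyl x * H).trace.re ^ 6) / 2 ^ n := by
  have h4 : (4 : ℝ) ^ n = 2 ^ n * 2 ^ n := by rw [← mul_pow]; norm_num
  simp only [pFun, div_pow, ← pow_mul, mul_sum, sum_div, h4]
  refine sum_congr rfl fun x _ => ?_
  field_simp
  ring

open Classical in
lemma re_trace_mul_outer_pow_six_le {φ : (Fin n → ZMod 2) → ℂ} (hφ : IsStabilizerState φ)
    (ρ : Matrix (Fin n → ZMod 2) (Fin n → ZMod 2) ℂ) :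
    (ρ * outer φ).trace.re ^ 6 ≤ 4 ^ n * ∑ x, pFun ρ x ^ 3 := by
  set L := (weylSet (outer φ)).toFinset
  set d : PhaseSpace n → ℝ := fun x => (Weyl x * ρ).trace.re
  have hL : (#L : ℝ) = 2 ^ n := by
    rw [← Nat.card_eq_card_toFinset, card_eq_two_pow_of_isLagrangian hφ.2]; push_cast; rfl
  rw [four_pow_mul_sum_pFun_cube, le_div_iff₀ (by positivity)]
  calc (ρ * outer φ).trace.re ^ 6 * 2 ^ n
      = |2 ^ n * (ρ * outer φ).trace.re| ^ 6 / (2 ^ n) ^ 5 := by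
        rw [(by decide : Even 6).pow_abs]; field_simp
    _ ≤ (∑ x ∈ L, |d x|) ^ 6 / (2 ^ n) ^ 5 := by
        gcongr; exact abs_two_pow_mul_re_trace_mul_outer_le hφ ρ
    _ ≤ ∑ x ∈ L, |d x| ^ 6 := by
        rw [← hL]; exact pow_sum_div_card_le_sum_pow (fun x _ => abs_nonneg (d x)) 5
    _ ≤ ∑ x, d x ^ 6 := by
        simp only [(by decide : Even 6).pow_abs]
        exact sum_le_sum_of_subset_of_nonneg (subset_univ L) fun x _ _ => by positivity

end

theorem sum_pFun_cube_ge_fidelity_pow_six_general {n : ℕ}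
    (ρ : Matrix (Fin n → ZMod 2) (Fin n → ZMod 2) ℂ)
    (hρ : ρ.PosSemidef) :
    4 ^ n * ∑ x, (pFun ρ x) ^ 3 ≥ (stabFidelity ρ) ^ 6 := by
  have hS : 0 ≤ 4 ^ n * ∑ x, pFun ρ x ^ 3 := by
    rw [four_pow_mul_sum_pFun_cube]; positivity
  refine iSup_pow_le_of_forall_pow_le (fun φ => ?_) (by norm_num) hS fun φ => ?_
  · exact re_trace_mul_outer_nonneg hρ φ.1
  · exact re_trace_mul_outer_pow_six_le φ.2 ρ

/-- For every n-qubit mixed state ρ,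
4^n ∑_x p_ρ(x)³ ≥ F(ρ)^6 where F is the stabilizer fidelity. -/
theorem sum_pFun_cube_ge_fidelity_pow_six {n : ℕ}
    (ρ : Matrix (Fin n → ZMod 2) (Fin n → ZMod 2) ℂ)
    (hρ : ρ.PosSemidef) (hτ : ρ.trace = 1) :
    4 ^ n * ∑ x, (pFun ρ x) ^ 3 ≥ (stabFidelity ρ) ^ 6 :=
  sum_pFun_cube_ge_fidelity_pow_six_general ρ hρ
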